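/- Every fuzzy interpretation I = {(p, x)} with x ∈ [0,1] is a fuzzy (1-)stable model of the formula ¬_s p ⊕_l p, where ¬_s(x)=1−x and ⊕_l(a,b)=min(a+b,1), while only I = {(p,0)} is a fuzzy stable model of the tautology p →_r p with →_r(a,b)=1 if a ≤ b, else b. -/

import Mathlib

open unitInterval
open scoped Classical

noncomputable section

def IsFuzzyNeg (n : I → I) : Prop :=
  (∀ ⦃x y : I⦄, x ≤ y → n y ≤ n x) ∧ n 0 = 1 ∧ n 1 = 0

def IsFuzzyConj (c : I → I → I) : Prop :=
  (∀ ⦃a b a' b' : I⦄, a ≤ a' → b ≤ b' → c a b ≤ c a' b') ∧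
  (∀ x y, c x y = c y x) ∧ (∀ x y z, c (c x y) z = c x (c y z)) ∧ (∀ x, c 1 x = x)

def IsFuzzyDisj (d : I → I → I) : Prop :=
  (∀ ⦃a b a' b' : I⦄, a ≤ a' → b ≤ b' → d a b ≤ d a' b') ∧
  (∀ x y, d x y = d y x) ∧ (∀ x y z, d (d x y) z = d x (d y z)) ∧ (∀ x, d 0 x = x)

def IsFuzzyImpl (i : I → I → I) : Prop :=
  (∀ (c : I) ⦃a b : I⦄, a ≤ b → i b c ≤ i a c) ∧
  (∀ (a : I) ⦃b c : I⦄, b ≤ c → i a b ≤ i a c) ∧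
  (∀ x, i 1 x = x) ∧ i 0 0 = 1

inductive FF (A : Type) where
  | atom : A → FF A
  | const : I → FF A
  | neg : (I → I) → FF A → FF A
  | conj : (I → I → I) → FF A → FF A → FF A
  | disj : (I → I → I) → FF A → FF A → FF A
  | impl : (I → I → I) → FF A → FF A → FF A

def WellFormed {A : Type} : FF A → Prop
  | .atom _ => True
  | .const _ => True
  | .neg n G => IsFuzzyNeg n ∧ WellFormed G
  | .conj c G H => IsFuzzyConj c ∧ WellFormed G ∧ WellFormed H
  | .disj d G H => IsFuzzyDisj d ∧ WellFormed G ∧ WellFormed H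
  | .impl i G H => IsFuzzyImpl i ∧ WellFormed G ∧ WellFormed H

def eval {A : Type} (Iv : A → I) : FF A → I
  | .atom p => Iv p
  | .const c => c
  | .neg n G => n (eval Iv G)
  | .conj c G H => c (eval Iv G) (eval Iv H)
  | .disj d G H => d (eval Iv G) (eval Iv H)
  | .impl i G H => i (eval Iv G) (eval Iv H)

def reduct {A : Type} (Iv : A → I) : FF A → FF A
  | .atom p => .atom p
  | .const c => .const c
  | .neg n G => .const (eval Iv (.neg n G))
  | .conj c G H => .conj (fun a b => min a b)
      (.conj c (reduct Iv G) (reduct Iv H)) (.const (eval Iv (.conj c G H)))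
  | .disj d G H => .conj (fun a b => min a b)
      (.disj d (reduct Iv G) (reduct Iv H)) (.const (eval Iv (.disj d G H)))
  | .impl i G H => .conj (fun a b => min a b)
      (.impl i (reduct Iv G) (reduct Iv H)) (.const (eval Iv (.impl i G H)))

def ltp {A : Type} (p : Set A) (J Iv : A → I) : Prop :=
  (∀ a ∉ p, J a = Iv a) ∧ (∀ a ∈ p, J a ≤ Iv a) ∧ J ≠ Iv

def yStable {A : Type} (y : I) (F : FF A) (Iv : A → I) (p : Set A) : Prop :=
  y ≤ eval Iv F ∧ ¬ ∃ J, ltp p J Iv ∧ y ≤ eval J (reduct Iv F)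

def Stable1 {A : Type} (F : FF A) (Iv : A → I) (p : Set A) : Prop :=
  eval Iv F = 1 ∧ ¬ ∃ J, ltp p J Iv ∧ eval J (reduct Iv F) = 1

def lukDisj (x y : I) : I :=
  ⟨min (x.1 + y.1) 1, le_min (add_nonneg x.2.1 y.2.1) zero_le_one, min_le_right _ _⟩

def rImpl (x y : I) : I := if x ≤ y then 1 else y

/-!
The reduct of `¬ₛ p ⊕ₗ p` under `x` freezes the negation at `1 - x`, so a smaller `J` satisfies
it only if `1 - x + J p ≥ 1`, i.e. `J p ≥ x`: no smaller interpretation survives. The reduct of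
`p →ᵣ p` is still a tautology, satisfied by every `J`, so only the least interpretation `p ↦ 0`
is stable.
-/

theorem ltp_univ_iff {A : Type} {J Iv : A → I} : ltp Set.univ J Iv ↔ J < Iv := by
  simp [ltp, lt_iff_le_and_ne, Pi.le_def]

theorem stable1_univ_iff {A : Type} {F : FF A} {Iv : A → I} :
    Stable1 F Iv Set.univ ↔ eval Iv F = 1 ∧ ∀ J < Iv, eval J (reduct Iv F) ≠ 1 := by
  simp [Stable1, ltp_univ_iff]

theorem stable1_unit_iff {F : FF Unit} {x : I} :
    Stable1 F (fun _ => x) Set.univ ↔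
      eval (fun _ => x) F = 1 ∧ ∀ y < x, eval (fun _ => y) (reduct (fun _ => x) F) ≠ 1 := by
  have lt_const_iff : ∀ J : Unit → I, J < (fun _ => x) ↔ J () < x := fun J => by
    simp only [Pi.lt_def, Pi.le_def, Unique.forall_iff, Unique.exists_iff]
    exact ⟨And.right, fun h => ⟨h.le, h⟩⟩
  simp only [stable1_univ_iff, lt_const_iff]
  exact and_congr_right fun _ => ⟨fun h y hy => h _ hy, fun h J hJ => h _ hJ⟩

theorem min_eq_one_iff {a b : I} : min a b = 1 ↔ a = 1 ∧ b = 1 :=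
  min_eq_top

theorem lukDisj_eq_one_iff {x y : I} : lukDisj x y = 1 ↔ 1 ≤ (x : ℝ) + y := by
  simp [lukDisj, Subtype.ext_iff]

theorem lukDisj_symm_eq_one_iff {x y : I} : lukDisj (σ x) y = 1 ↔ x ≤ y := by
  rw [lukDisj_eq_one_iff, coe_symm_eq, ← Subtype.coe_le_coe]
  constructor <;> intro h <;> linarith

theorem rImpl_self (x : I) : rImpl x x = 1 :=
  if_pos le_rfl

theorem stable_excluded_middle_and_tautology :
    (∀ x : I,
      Stable1 (.disj lukDisj (.neg unitInterval.symm (.atom ())) (.atom ()))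
        (fun _ : Unit => x) Set.univ) ∧
    (∀ x : I,
      Stable1 (.impl rImpl (.atom ()) (.atom ())) (fun _ : Unit => x) Set.univ
        ↔ x = 0) := by
  refine ⟨fun x => stable1_unit_iff.2 ⟨?_, fun y hy h => ?_⟩, fun x => ?_⟩
  · exact lukDisj_symm_eq_one_iff.2 le_rfl
  · simp only [reduct, eval, min_eq_one_iff] at h
    exact hy.not_ge (lukDisj_symm_eq_one_iff.1 h.1)
  · simp only [stable1_unit_iff, reduct, eval, rImpl_self, min_self, true_and, ne_eq,
      not_true_eq_false, imp_false]
    exact isMin_iff_forall_not_lt.symm.trans isMin_iff_eq_bot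

end
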